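/- For every real x ≥ 1, (1/2) ∑_{n ≤ 4x} (−1)^n d(n) = x(log x + 2γ − 1) + Δ*(x), where the sum is over positive integers n ≤ 4x and Δ*(x) = −Δ(x) + 2Δ(2x) − (1/2)Δ(4x). (Arithmetic interpretation of Δ*.) -/

import Mathlib

/-- The error term in the Dirichlet divisor problem:
`Δ(x) = ∑_{n ≤ x} d(n) − x(log x + 2γ − 1)`. -/
noncomputable def divisorError (x : ℝ) : ℝ :=
  (∑ n ∈ Finset.Icc 1 ⌊x⌋₊, ((Nat.divisors n).card : ℝ)) -
    x * (Real.log x + 2 * Real.eulerMascheroniConstant - 1)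

/-- `Δ*(x) = −Δ(x) + 2Δ(2x) − (1/2)Δ(4x)`. -/
noncomputable def divisorErrorStar (x : ℝ) : ℝ :=
  -divisorError x + 2 * divisorError (2 * x) - (1 / 2) * divisorError (4 * x)

/-!
Counting even and odd divisors separately gives `d(2m) = 2 d(m) − d(m/2)`, the last term being
present only for even `m`. Summed over `m ≤ 2x`, this expresses the even-indexed part of
`∑_{n ≤ 4x} (−1)ⁿ d(n)` through `D(2x)` and `D(x)`, where `D(y) = ∑_{n ≤ y} d(n)`, so that the
whole alternating sum equals `4 D(2x) − 2 D(x) − D(4x)`. The main terms `y (log y + c)` survive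
the combination `−f(x) + 2 f(2x) − f(4x)/2` unchanged, because the multiples of `log 2` cancel.
-/

open Finset Real

namespace Nat

theorem Icc_filter_dvd_eq_map {p : ℕ} (hp : p ≠ 0) (N : ℕ) :
    {n ∈ Icc 1 N | p ∣ n} = (Icc 1 (N / p)).map ⟨(p * ·), mul_right_injective₀ hp⟩ := by
  ext n
  simp only [mem_filter, mem_Icc, mem_map, Function.Embedding.coeFn_mk]
  constructor
  · rintro ⟨⟨h1, hN⟩, m, rfl⟩
    refine ⟨m, ⟨Nat.pos_of_mul_pos_left h1, ?_⟩, rfl⟩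
    rwa [le_div_iff_mul_le (Nat.pos_of_ne_zero hp), mul_comm]
  · rintro ⟨m, ⟨h1, hm⟩, rfl⟩
    rw [le_div_iff_mul_le (Nat.pos_of_ne_zero hp), mul_comm] at hm
    exact ⟨⟨Nat.mul_pos (Nat.pos_of_ne_zero hp) h1, hm⟩, m, rfl⟩

theorem sum_Icc_filter_dvd {M : Type*} [AddCommMonoid M] (f : ℕ → M) (p N : ℕ) :
    ∑ n ∈ Icc 1 N with p ∣ n, f n = ∑ m ∈ Icc 1 (N / p), f (p * m) := by
  rcases eq_or_ne p 0 with rfl | hp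
  · simp +contextual [sum_filter]
  rw [Icc_filter_dvd_eq_map hp, sum_map]
  rfl

theorem divisors_mul_filter_dvd {p : ℕ} (hp : p ≠ 0) (m : ℕ) :
    {e ∈ (p * m).divisors | p ∣ e} =
      m.divisors.map ⟨(p * ·), mul_right_injective₀ hp⟩ := by
  ext e
  simp only [mem_filter, mem_divisors, mem_map, Function.Embedding.coeFn_mk]
  constructor
  · rintro ⟨⟨he, hpm⟩, f, rfl⟩
    have hf := (Nat.mul_dvd_mul_iff_left (Nat.pos_of_ne_zero hp)).1 he
    exact ⟨f, ⟨hf, right_ne_zero_of_mul hpm⟩, rfl⟩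
  · rintro ⟨f, ⟨hf, hm⟩, rfl⟩
    exact ⟨⟨mul_dvd_mul_left p hf, mul_ne_zero hp hm⟩, f, rfl⟩

theorem card_divisors_filter_dvd {p : ℕ} (hp : p ≠ 0) (m : ℕ) :
    #{e ∈ m.divisors | p ∣ e} = if p ∣ m then #(m / p).divisors else 0 := by
  split_ifs with hpm
  · obtain ⟨k, rfl⟩ := hpm
    rw [divisors_mul_filter_dvd hp, card_map, Nat.mul_div_cancel_left k (Nat.pos_of_ne_zero hp)]
  · refine Finset.card_eq_zero.2 <| filter_eq_empty_iff.2 fun e he hpe => ?_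
    exact hpm (hpe.trans (dvd_of_mem_divisors he))

theorem Prime.divisors_mul_filter_not_dvd {p : ℕ} (hp : p.Prime) (m : ℕ) :
    {e ∈ (p * m).divisors | ¬p ∣ e} = {e ∈ m.divisors | ¬p ∣ e} := by
  ext e
  simp only [mem_filter, mem_divisors]
  constructor
  · rintro ⟨⟨he, hpm⟩, hpe⟩
    have hcop : e.Coprime p := ((hp.coprime_iff_not_dvd).2 hpe).symm
    exact ⟨⟨hcop.dvd_of_dvd_mul_left he, right_ne_zero_of_mul hpm⟩, hpe⟩
  · rintro ⟨⟨he, hm⟩, hpe⟩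
    exact ⟨⟨he.mul_left p, mul_ne_zero hp.ne_zero hm⟩, hpe⟩

theorem Prime.card_divisors_mul_add {p : ℕ} (hp : p.Prime) (m : ℕ) :
    #(p * m).divisors + (if p ∣ m then #(m / p).divisors else 0) = 2 * #m.divisors := by
  have hpm := card_filter_add_card_filter_not (s := (p * m).divisors) (p ∣ ·)
  have hm := card_filter_add_card_filter_not (s := m.divisors) (p ∣ ·)
  rw [divisors_mul_filter_dvd hp.ne_zero, card_map, hp.divisors_mul_filter_not_dvd] at hpm
  rw [card_divisors_filter_dvd hp.ne_zero] at hm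
  omega

theorem Prime.sum_Icc_card_divisors_mul_add {p : ℕ} (hp : p.Prime) (M : ℕ) :
    ∑ m ∈ Icc 1 M, #(p * m).divisors + ∑ k ∈ Icc 1 (M / p), #k.divisors
      = 2 * ∑ m ∈ Icc 1 M, #m.divisors := by
  have hmultiples : ∑ k ∈ Icc 1 (M / p), #k.divisors
      = ∑ m ∈ Icc 1 M with p ∣ m, #(m / p).divisors := by
    simp only [sum_Icc_filter_dvd, Nat.mul_div_cancel_left _ hp.pos]
  rw [hmultiples, sum_filter, ← sum_add_distrib, mul_sum]
  exact sum_congr rfl fun m _ => hp.card_divisors_mul_add m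

end Nat

theorem sum_Icc_neg_one_pow_mul {R : Type*} [Ring R] (f : ℕ → R) (N : ℕ) :
    ∑ n ∈ Icc 1 N, (-1) ^ n * f n =
      2 * ∑ m ∈ Icc 1 (N / 2), f (2 * m) - ∑ n ∈ Icc 1 N, f n := by
  rw [← Nat.sum_Icc_filter_dvd, sum_filter, mul_sum, eq_sub_iff_add_eq, ← sum_add_distrib]
  refine sum_congr rfl fun n _ => ?_
  rcases Nat.even_or_odd n with hn | hn
  · rw [if_pos (even_iff_two_dvd.1 hn), hn.neg_one_pow]
    noncomm_ring
  · rw [if_neg (Nat.not_even_iff_odd.2 hn ∘ even_iff_two_dvd.2), hn.neg_one_pow]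
    noncomm_ring

theorem mul_log_add_eq_neg_add_two_mul_sub_half (c x : ℝ) :
    x * (log x + c) = -(x * (log x + c)) + 2 * (2 * x * (log (2 * x) + c))
      - 1 / 2 * (4 * x * (log (4 * x) + c)) := by
  rcases eq_or_ne x 0 with rfl | hx
  · simp
  have hlog_four : log 4 = 2 * log 2 := by
    rw [show (4 : ℝ) = 2 ^ 2 by norm_num, log_pow, Nat.cast_ofNat]
  rw [log_mul two_ne_zero hx, log_mul four_ne_zero hx, hlog_four]
  ring

theorem divisorErrorStar_arithmetic_general (x : ℝ) :
    (1 / 2) * ∑ n ∈ Finset.Icc 1 ⌊4 * x⌋₊, (-1 : ℝ) ^ n * ((Nat.divisors n).card : ℝ) =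
      x * (Real.log x + 2 * Real.eulerMascheroniConstant - 1) + divisorErrorStar x := by
  have hfloor (y : ℝ) : ⌊2 * y⌋₊ / 2 = ⌊y⌋₊ := by
    rw [← Nat.floor_div_ofNat, mul_div_cancel_left₀ _ two_ne_zero]
  have hfloor_four : ⌊4 * x⌋₊ / 2 = ⌊2 * x⌋₊ := by
    rw [show 4 * x = 2 * (2 * x) by ring, hfloor]
  have halternating := sum_Icc_neg_one_pow_mul (fun n ↦ (#n.divisors : ℝ)) ⌊4 * x⌋₊
  rw [hfloor_four] at halternating
  have hdoubling :=
    congr_arg ((↑) : ℕ → ℝ) (Nat.prime_two.sum_Icc_card_divisors_mul_add ⌊2 * x⌋₊)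
  rw [hfloor] at hdoubling
  push_cast at hdoubling
  have hmain := mul_log_add_eq_neg_add_two_mul_sub_half (2 * eulerMascheroniConstant - 1) x
  simp only [divisorErrorStar, divisorError, halternating]
  linarith

/-- Arithmetic interpretation of `Δ*`:
`(1/2) ∑_{n ≤ 4x} (−1)ⁿ d(n) = x(log x + 2γ − 1) + Δ*(x)` for `x ≥ 1`. -/
theorem divisorErrorStar_arithmetic (x : ℝ) (hx : 1 ≤ x) :
    (1 / 2) * ∑ n ∈ Finset.Icc 1 ⌊4 * x⌋₊, (-1 : ℝ) ^ n * ((Nat.divisors n).card : ℝ) =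
      x * (Real.log x + 2 * Real.eulerMascheroniConstant - 1) + divisorErrorStar x :=
  divisorErrorStar_arithmetic_general x
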